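/- arXiv:1810.02038 — 5 statements merged into one kernel-verified Lean document; each statement's English description precedes it below -/
import Mathlib

section
/- The function (t_1,...,t_n) ↦ log det(∑_{i=1}^n e^{t_i} v_i v_i^T) is convex on ℝ^n, for any vectors v_1,...,v_n in ℝ^k such that the matrix ∑ e^{t_i} v_i v_i^T is positive definite for all t (e.g. when v_1,...,v_n span ℝ^k). -/
/-!
Expanding `det (A * B)` multilinearly in the rows of `A * B` and symmetrizing over the
permutations of the rows gives the Cauchy–Binet-type identity
`k! · det (∑ cᵢ vᵢ vᵢᵀ) = ∑_{f : Fin k → Fin n} (∏ⱼ c_{f j}) · det (v_{f 1}, …, v_{f k})²`.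
For `cᵢ = exp tᵢ` the determinant is therefore a sum of exponentials of linear forms in `t`
with nonnegative coefficients, and the logarithm of such a sum is convex by Hölder's inequality.
-/

open Real Matrix Finset Equiv Nat

namespace Matrix

variable {R : Type*} [CommRing R] {m ι : Type*} [Fintype m] [DecidableEq m] [Fintype ι]

theorem det_mul_eq_sum_prod_mul_det_submatrix (A : Matrix m ι R) (B : Matrix ι m R) :
    det (A * B) = ∑ f : m → ι, (∏ j, A j (f j)) * det (B.submatrix f id) := by
  classical
  have hrows : A * B = fun j => ∑ i, A j i • B i := by
    ext j l; simp [mul_apply, Finset.sum_apply]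
  rw [hrows]
  change (detRowAlternating : (m → R) [⋀^m]→ₗ[R] R).toMultilinearMap _ = _
  rw [MultilinearMap.map_sum]
  refine sum_congr rfl fun f _ => ?_
  rw [MultilinearMap.map_smul_univ, smul_eq_mul]
  rfl

theorem factorial_card_smul_det_mul (A : Matrix m ι R) (B : Matrix ι m R) :
    (Fintype.card m)! • det (A * B) =
      ∑ f : m → ι, det (A.submatrix id f) * det (B.submatrix f id) := by
  have hperm (σ : Perm m) : det (A * B) =
      ∑ f : m → ι, (Perm.sign σ * ∏ j, A j (f (σ j))) * det (B.submatrix f id) := by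
    rw [det_mul_eq_sum_prod_mul_det_submatrix,
      ← (σ.symm.arrowCongr (Equiv.refl ι)).sum_comp]
    refine sum_congr rfl fun f _ => ?_
    change (∏ j, A j (f (σ j))) * det ((B.submatrix f id).submatrix σ id) = _
    rw [det_permute]
    ring
  have hdet (f : m → ι) :
      ∑ σ : Perm m, Perm.sign σ * ∏ j, A j (f (σ j)) = det (A.submatrix id f) := by
    rw [← det_transpose, det_apply']
    rfl
  calc (Fintype.card m)! • det (A * B)
      = ∑ σ : Perm m, det (A * B) := by rw [sum_const, Finset.card_univ, Fintype.card_perm]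
    _ = ∑ σ : Perm m, ∑ f : m → ι, (Perm.sign σ * ∏ j, A j (f (σ j))) * det (B.submatrix f id) :=
        sum_congr rfl fun σ _ => hperm σ
    _ = _ := by
        rw [sum_comm]
        simp only [← sum_mul, hdet]

theorem factorial_card_smul_det_sum_smul_vecMulVec (c : ι → R) (v : ι → m → R) :
    (Fintype.card m)! • det (∑ i, c i • vecMulVec (v i) (v i)) =
      ∑ f : m → ι, (∏ j, c (f j)) * det (of fun j => v (f j)) ^ 2 := by
  have hfactor : ∑ i, c i • vecMulVec (v i) (v i) = (of v)ᵀ * of fun i => c i • v i := by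
    ext j l
    simp only [Matrix.sum_apply, smul_apply, vecMulVec_apply, mul_apply, transpose_apply, of_apply,
      Pi.smul_apply, smul_eq_mul]
    exact sum_congr rfl fun i _ => by ring
  rw [hfactor, factorial_card_smul_det_mul]
  refine sum_congr rfl fun f _ => ?_
  rw [← transpose_submatrix, det_transpose]
  change det (of fun j => v (f j)) * det (of fun j l => c (f j) * of (fun j => v (f j)) j l) = _
  rw [det_mul_column]
  ring

end Matrix

theorem sum_mul_exp_add_le_rpow_mul_rpow {ι : Type*} (s : Finset ι) {w : ι → ℝ}
    (hw : ∀ i ∈ s, 0 ≤ w i) (u u' : ι → ℝ) {a b : ℝ} (ha : 0 < a) (hb : 0 < b) (hab : a + b = 1) :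
    ∑ i ∈ s, w i * exp (a * u i + b * u' i) ≤
      (∑ i ∈ s, w i * exp (u i)) ^ a * (∑ i ∈ s, w i * exp (u' i)) ^ b := by
  have hsplit : ∀ i ∈ s, w i * exp (a * u i + b * u' i) =
      (w i * exp (u i)) ^ a * (w i * exp (u' i)) ^ b := by
    intro i hi
    rw [mul_rpow (hw i hi) (exp_pos _).le, mul_rpow (hw i hi) (exp_pos _).le, ← exp_mul,
      ← exp_mul, exp_add, mul_mul_mul_comm, ← rpow_add_of_nonneg (hw i hi) ha.le hb.le, hab,
      rpow_one, mul_comm (u i), mul_comm (u' i)]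
  have hconj : HolderConjugate a⁻¹ b⁻¹ := ⟨by simpa using hab, inv_pos.2 ha, inv_pos.2 hb⟩
  calc ∑ i ∈ s, w i * exp (a * u i + b * u' i)
      = ∑ i ∈ s, (w i * exp (u i)) ^ a * (w i * exp (u' i)) ^ b := sum_congr rfl hsplit
    _ ≤ (∑ i ∈ s, ((w i * exp (u i)) ^ a) ^ a⁻¹) ^ (1 / a⁻¹) *
          (∑ i ∈ s, ((w i * exp (u' i)) ^ b) ^ b⁻¹) ^ (1 / b⁻¹) :=
        inner_le_Lp_mul_Lq_of_nonneg s hconj (fun i hi => by have := hw i hi; positivity)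
          (fun i hi => by have := hw i hi; positivity)
    _ = _ := by
        simp_rw [one_div, inv_inv]
        congr 2 <;> refine sum_congr rfl fun i hi => rpow_rpow_inv ?_ (by positivity)
          <;> have := hw i hi <;> positivity

theorem convexOn_log_sum_mul_exp {ι E : Type*} [Fintype ι] [AddCommGroup E] [Module ℝ E]
    {w : ι → ℝ} (hw : ∀ i, 0 ≤ w i) (ℓ : ι → E →ₗ[ℝ] ℝ) :
    ConvexOn ℝ Set.univ fun x => log (∑ i, w i * exp (ℓ i x)) := by
  -- if all weights vanish, the function is `log 0 = 0`
  by_cases hzero : ∀ i, w i = 0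
  · simpa [hzero] using convexOn_const 0 convex_univ
  obtain ⟨i₀, hi₀⟩ : ∃ i, 0 < w i := by
    push Not at hzero
    obtain ⟨i, hi⟩ := hzero
    exact ⟨i, (hw i).lt_of_ne' hi⟩
  have hpos (x : E) : 0 < ∑ i, w i * exp (ℓ i x) :=
    lt_of_lt_of_le (by positivity)
      (single_le_sum (fun i _ => mul_nonneg (hw i) (exp_pos _).le) (mem_univ i₀))
  refine convexOn_iff_forall_pos.2 ⟨convex_univ, fun x _ y _ a b ha hb hab => ?_⟩
  have hholder := sum_mul_exp_add_le_rpow_mul_rpow univ (fun i _ => hw i) (fun i => ℓ i x)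
    (fun i => ℓ i y) ha hb hab
  simp only [map_add, map_smul, smul_eq_mul]
  calc log (∑ i, w i * exp (a * ℓ i x + b * ℓ i y))
      ≤ log ((∑ i, w i * exp (ℓ i x)) ^ a * (∑ i, w i * exp (ℓ i y)) ^ b) :=
        log_le_log (by simpa [map_add, map_smul] using hpos (a • x + b • y)) hholder
    _ = a * log (∑ i, w i * exp (ℓ i x)) + b * log (∑ i, w i * exp (ℓ i y)) := by
        rw [log_mul (rpow_pos_of_pos (hpos x) a).ne' (rpow_pos_of_pos (hpos y) b).ne',
          log_rpow (hpos x), log_rpow (hpos y)]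

theorem stmt0_general (k n : ℕ) (v : Fin n → Fin k → ℝ) :
    ConvexOn ℝ Set.univ (fun t : Fin n → ℝ =>
      Real.log (∑ i, Real.exp (t i) • Matrix.vecMulVec (v i) (v i)).det) := by
  have hexpand (t : Fin n → ℝ) : (∑ i, exp (t i) • vecMulVec (v i) (v i)).det =
      ∑ f : Fin k → Fin n, ((k ! : ℝ)⁻¹ * det (of fun j => v (f j)) ^ 2) *
        exp ((∑ j, LinearMap.proj (f j) : (Fin n → ℝ) →ₗ[ℝ] ℝ) t) := by
    have hfact := factorial_card_smul_det_sum_smul_vecMulVec (fun i => exp (t i)) v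
    rw [Fintype.card_fin, nsmul_eq_mul] at hfact
    rw [eq_comm, ← inv_mul_eq_iff_eq_mul₀ (by positivity)] at hfact
    simp only [← hfact, mul_sum, LinearMap.sum_apply, LinearMap.proj_apply, exp_sum]
    exact sum_congr rfl fun f _ => by ring
  simp_rw [hexpand]
  exact convexOn_log_sum_mul_exp (fun f => by positivity) _

theorem stmt0 (k n : ℕ) (v : Fin n → Fin k → ℝ)
    (hpd : ∀ t : Fin n → ℝ,
      (∑ i, Real.exp (t i) • Matrix.vecMulVec (v i) (v i)).PosDef) :
    ConvexOn ℝ Set.univ (fun t : Fin n → ℝ =>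
      Real.log (∑ i, Real.exp (t i) • Matrix.vecMulVec (v i) (v i)).det) :=
  stmt0_general k n v
end

section
/- For k×k real symmetric positive semidefinite matrices A_1,...,A_n, the function (x_1,...,x_n) ↦ det(∑_{i=1}^n x_i A_i) is a homogeneous polynomial of degree k of the form ∑_{1 ≤ j_1,...,j_k ≤ n} b_{j_1,...,j_k} x_{j_1}···x_{j_k} with all coefficients b_{j_1,...,j_k} ≥ 0. -/
/-!
Write each `A i` as a sum of rank-one matrices `u uᵀ`, so that `∑ i, x i • A i` has the form
`∑ s, y s • u s uᵀ s`. Expanding its determinant multilinearly in the rows gives a sum over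
`t : Fin k → S` of `(∏ p, y (t p) * u (t p) p) * det U_t`, where `U_t` has rows `u (t p)`.
Averaging over the reorderings `t ∘ σ` turns `∏ p, u (t p) p` into the Leibniz expansion of
`det U_t`, so `k! * det = ∑ t, (∏ p, y (t p)) * (det U_t)^2`; grouping the `t` by the indices `i`
of the matrices their vectors come from yields nonnegative coefficients.
-/

open Matrix Finset Equiv

namespace Matrix

variable {R : Type*} [CommRing R] {m S : Type*} [Fintype m] [DecidableEq m]

theorem det_of_smul_rows (c : m → R) (v : m → m → R) :
    det (of fun p => c p • v p) = (∏ p, c p) * det (of v) :=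
  (detRowAlternating : (m → R) [⋀^m]→ₗ[R] R).toMultilinearMap.map_smul_univ c v

theorem sum_perm_prod_mul_det_eq_sq (y : S → R) (u : S → m → R) (t : m → S) :
    ∑ σ : Perm m, (∏ p, y (t (σ p)) * u (t (σ p)) p) * det (of fun p => u (t (σ p)))
      = (∏ p, y (t p)) * det (of fun p => u (t p)) ^ 2 := by
  set U : Matrix m m R := of fun p => u (t p)
  have hterm : ∀ σ : Perm m,
      (∏ p, y (t (σ p)) * u (t (σ p)) p) * det (of fun p => u (t (σ p)))
        = (∏ p, y (t p)) * det U * (Perm.sign σ * ∏ p, U (σ p) p) := by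
    intro σ
    rw [prod_mul_distrib, Equiv.prod_comp σ (fun p => y (t p)),
      show (of fun p => u (t (σ p))) = U.submatrix σ id from rfl, det_permute]
    simp only [U, of_apply]
    ring
  rw [sum_congr rfl fun σ _ => hterm σ, ← mul_sum, ← det_apply', sq, mul_assoc]

variable [Fintype S]

theorem det_of_sum_rows (v : m → S → m → R) :
    det (of fun p => ∑ s, v p s) = ∑ t : m → S, det (of fun p => v p (t p)) := by
  classical
  exact (detRowAlternating : (m → R) [⋀^m]→ₗ[R] R).toMultilinearMap.map_sum v

theorem det_sum_smul_vecMulVec (y : S → R) (u : S → m → R) :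
    det (∑ s, y s • vecMulVec (u s) (u s))
      = ∑ t : m → S, (∏ p, y (t p) * u (t p) p) * det (of fun p => u (t p)) := by
  have hrows : ∑ s, y s • vecMulVec (u s) (u s) = of fun p => ∑ s, (y s * u s p) • u s := by
    ext p q
    simp [Matrix.sum_apply, vecMulVec_apply, Finset.sum_apply, mul_assoc]
  rw [hrows, det_of_sum_rows]
  exact Finset.sum_congr rfl fun t _ => det_of_smul_rows _ _

theorem factorial_mul_det_sum_smul_vecMulVec (y : S → R) (u : S → m → R) :
    (Fintype.card m).factorial * det (∑ s, y s • vecMulVec (u s) (u s))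
      = ∑ t : m → S, (∏ p, y (t p)) * det (of fun p => u (t p)) ^ 2 := by
  set term : (m → S) → R := fun t => (∏ p, y (t p) * u (t p) p) * det (of fun p => u (t p))
  have hinv : ∀ σ : Perm m, ∑ t, term (t ∘ σ) = ∑ t, term t := fun σ =>
    (Equiv.arrowCongr σ.symm (Equiv.refl S)).sum_comp term
  calc ((Fintype.card m).factorial : R) * det (∑ s, y s • vecMulVec (u s) (u s))
      = ∑ σ : Perm m, ∑ t, term (t ∘ σ) := by
        simp only [hinv, sum_const, card_univ, Fintype.card_perm, nsmul_eq_mul,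
          det_sum_smul_vecMulVec, term]
    _ = ∑ t : m → S, (∏ p, y (t p)) * det (of fun p => u (t p)) ^ 2 := by
        rw [sum_comm]
        exact sum_congr rfl fun t _ => sum_perm_prod_mul_det_eq_sq y u t

end Matrix

theorem stmt1 (k n : ℕ) (A : Fin n → Matrix (Fin k) (Fin k) ℝ)
    (hpsd : ∀ i, (A i).PosSemidef) :
    ∃ b : (Fin k → Fin n) → ℝ, (∀ j, 0 ≤ b j) ∧
      ∀ x : Fin n → ℝ,
        (∑ i, x i • A i).det = ∑ j : Fin k → Fin n, b j * ∏ m, x (j m) := by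
  choose r v hv using fun i => posSemidef_iff_eq_sum_vecMulVec.mp (hpsd i)
  let u : (Σ i, Fin (r i)) → Fin k → ℝ := fun s => v s.1 s.2
  let U : (Fin k → Σ i, Fin (r i)) → Matrix (Fin k) (Fin k) ℝ := fun t => of fun p => u (t p)
  have hsum : ∀ x : Fin n → ℝ, ∑ i, x i • A i = ∑ s, x s.1 • vecMulVec (u s) (u s) := by
    intro x
    simp only [hv, star_trivial, smul_sum, Fintype.sum_sigma, u]
  refine ⟨fun j => ((k.factorial : ℝ)⁻¹ * ∑ t : {t // Sigma.fst ∘ t = j}, det (U t.1) ^ 2),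
    fun j => by positivity, fun x => ?_⟩
  have hk : (k.factorial : ℝ) ≠ 0 := by positivity
  have hexp := factorial_mul_det_sum_smul_vecMulVec (fun s => x s.1) u
  rw [Fintype.card_fin] at hexp
  rw [hsum, eq_inv_mul_iff_mul_eq₀ hk |>.mpr hexp, mul_sum,
    ← Fintype.sum_fiberwise (Sigma.fst ∘ ·)]
  refine sum_congr rfl fun j _ => ?_
  dsimp only
  rw [mul_sum, sum_mul]
  refine sum_congr rfl fun ⟨t, ht⟩ _ => ?_
  simp only [← ht, Function.comp_apply, U]
  ring
end

section
/- For any x ∈ ℝ, ∫_0^∞ (1/(2√(π y))) e^{-x²/(4y)} e^{-y} dy = (1/2) e^{-|x|}. -/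
/-!
Substituting `y = t ^ 2` turns the integral into `π^(-1/2) ∫₀^∞ exp (-(t ^ 2 + b ^ 2 / t ^ 2)) dt`
with `b = |x| / 2`. Completing the square, `t ^ 2 + b ^ 2 / t ^ 2 = (t - b / t) ^ 2 + 2 b`, and the
Cauchy–Schlömilch substitution `u = t - b / t`, a bijection `(0, ∞) → ℝ` with `du = (1 + b / t ^ 2) dt`,
evaluates `∫₀^∞ exp (-(t - b / t) ^ 2) dt = √π / 2`: the involution `t ↦ b / t` sends `u` to `-u`,
so for an even integrand the weights `1` and `b / t ^ 2` contribute equally.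
-/

open MeasureTheory Real Set

section CauchySchlomilch

variable {E : Type*} [NormedAddCommGroup E] [NormedSpace ℝ E] {b : ℝ}

lemma image_div_Ioi_zero (hb : 0 < b) : (fun t : ℝ => b / t) '' Ioi 0 = Ioi 0 := by
  ext y
  refine ⟨fun ⟨t, ht, hy⟩ => hy ▸ div_pos hb ht, fun hy => ⟨b / y, div_pos hb hy, ?_⟩⟩
  field_simp [(mem_Ioi.mp hy).ne']

lemma injOn_div_Ioi_zero (hb : 0 < b) : InjOn (fun t : ℝ => b / t) (Ioi 0) :=
  fun _ _ _ _ h => by simpa [div_eq_mul_inv, hb.ne'] using h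

lemma hasDerivWithinAt_div_Ioi_zero {t : ℝ} (ht : t ∈ Ioi 0) :
    HasDerivWithinAt (fun t : ℝ => b / t) (-(b / t ^ 2)) (Ioi 0) t := by
  simpa [div_eq_mul_inv, neg_div] using
    ((hasDerivAt_inv (mem_Ioi.mp ht).ne').const_mul b).hasDerivWithinAt

lemma image_sub_div_Ioi_zero (hb : 0 < b) : (fun t : ℝ => t - b / t) '' Ioi 0 = univ := by
  refine eq_univ_of_forall fun u => ?_
  -- the positive root of `t ^ 2 - u t - b`
  set s := √(u ^ 2 + 4 * b)
  have hs : s ^ 2 = u ^ 2 + 4 * b := sq_sqrt (by positivity)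
  have hus : |u| < s := by
    rw [← sqrt_sq_eq_abs]
    exact sqrt_lt_sqrt (sq_nonneg u) (by linarith)
  have hpos : 0 < u + s := by linarith [neg_abs_le u]
  refine ⟨(u + s) / 2, div_pos hpos two_pos, ?_⟩
  field_simp
  nlinarith

lemma strictMonoOn_sub_div_Ioi_zero (hb : 0 < b) : StrictMonoOn (fun t : ℝ => t - b / t) (Ioi 0) :=
  fun _ hs _ _ hst => sub_lt_sub hst (div_lt_div_of_pos_left hb hs hst)

lemma hasDerivWithinAt_sub_div_Ioi_zero {t : ℝ} (ht : t ∈ Ioi 0) :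
    HasDerivWithinAt (fun t : ℝ => t - b / t) (1 + b / t ^ 2) (Ioi 0) t := by
  simpa using ((hasDerivAt_id' t).hasDerivWithinAt.fun_sub (hasDerivWithinAt_div_Ioi_zero ht))

lemma integral_comp_div_Ioi_zero (hb : 0 < b) (g : ℝ → E) :
    ∫ t in Ioi 0, (b / t ^ 2) • g (b / t) = ∫ t in Ioi 0, g t := by
  have := integral_image_eq_integral_abs_deriv_smul measurableSet_Ioi
    (fun _ ht => hasDerivWithinAt_div_Ioi_zero ht) (injOn_div_Ioi_zero hb) g
  rw [image_div_Ioi_zero hb] at this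
  rw [this]
  refine setIntegral_congr_fun measurableSet_Ioi fun t ht => ?_
  simp only [abs_neg, abs_of_pos (div_pos hb (pow_pos (mem_Ioi.mp ht) 2))]

lemma integrableOn_comp_div_Ioi_zero_iff (hb : 0 < b) (g : ℝ → E) :
    IntegrableOn (fun t => (b / t ^ 2) • g (b / t)) (Ioi 0) ↔ IntegrableOn g (Ioi 0) := by
  have := integrableOn_image_iff_integrableOn_abs_deriv_smul measurableSet_Ioi
    (fun _ ht => hasDerivWithinAt_div_Ioi_zero ht) (injOn_div_Ioi_zero hb) g
  rw [image_div_Ioi_zero hb] at this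
  rw [this]
  refine integrableOn_congr_fun (fun t ht => ?_) measurableSet_Ioi
  simp only [abs_neg, abs_of_pos (div_pos hb (pow_pos (mem_Ioi.mp ht) 2))]

lemma integral_comp_sub_div_Ioi_zero (hb : 0 < b) (f : ℝ → E) :
    ∫ t in Ioi 0, (1 + b / t ^ 2) • f (t - b / t) = ∫ u, f u := by
  have := integral_image_eq_integral_abs_deriv_smul measurableSet_Ioi
    (fun _ ht => hasDerivWithinAt_sub_div_Ioi_zero ht) (strictMonoOn_sub_div_Ioi_zero hb).injOn f
  rw [image_sub_div_Ioi_zero hb, Measure.restrict_univ] at this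
  rw [this]
  refine setIntegral_congr_fun measurableSet_Ioi fun t ht => ?_
  simp only [abs_of_pos (by positivity : 0 < 1 + b / t ^ 2)]

lemma integrableOn_comp_sub_div_Ioi_zero_iff (hb : 0 < b) (f : ℝ → E) :
    IntegrableOn (fun t => (1 + b / t ^ 2) • f (t - b / t)) (Ioi 0) ↔ Integrable f := by
  have := integrableOn_image_iff_integrableOn_abs_deriv_smul measurableSet_Ioi
    (fun _ ht => hasDerivWithinAt_sub_div_Ioi_zero ht) (strictMonoOn_sub_div_Ioi_zero hb).injOn f
  rw [image_sub_div_Ioi_zero hb, integrableOn_univ] at this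
  rw [this]
  refine integrableOn_congr_fun (fun t ht => ?_) measurableSet_Ioi
  simp only [abs_of_pos (by positivity : 0 < 1 + b / t ^ 2)]

theorem integral_comp_sub_div_Ioi_zero_of_even (hb : 0 < b) {f : ℝ → E} (hf : Integrable f)
    (heven : ∀ u, f (-u) = f u) :
    ∫ t in Ioi 0, f (t - b / t) = (2 : ℝ)⁻¹ • ∫ u, f u := by
  have hmirror : EqOn (fun t => (b / t ^ 2) • f (b / t - b / (b / t)))
      (fun t => (b / t ^ 2) • f (t - b / t)) (Ioi 0) := fun t _ => by
    dsimp only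
    rw [div_div_cancel₀ hb.ne', ← heven, neg_sub]
  have hweighted := (integrableOn_comp_sub_div_Ioi_zero_iff hb f).2 hf
  have hunweighted : IntegrableOn (fun t => f (t - b / t)) (Ioi 0) := by
    have hbound : ∀ t : ℝ, ‖(1 + b / t ^ 2)⁻¹‖ ≤ 1 := fun t => by
      rw [norm_inv, Real.norm_of_nonneg (by positivity)]
      exact inv_le_one_of_one_le₀ (le_add_of_nonneg_right (by positivity))
    refine IntegrableOn.congr_fun (hweighted.bdd_smul 1 (φ := fun t => (1 + b / t ^ 2)⁻¹)
      (by fun_prop : Measurable fun t : ℝ => (1 + b / t ^ 2)⁻¹).aestronglyMeasurable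
      (Filter.Eventually.of_forall hbound)) (fun t _ => ?_) measurableSet_Ioi
    simp [smul_smul, inv_mul_cancel₀ (by positivity : 1 + b / t ^ 2 ≠ 0)]
  have hmirrored : IntegrableOn (fun t => (b / t ^ 2) • f (t - b / t)) (Ioi 0) :=
    ((integrableOn_comp_div_Ioi_zero_iff hb _).2 hunweighted).congr_fun hmirror measurableSet_Ioi
  have hsame : ∫ t in Ioi 0, (b / t ^ 2) • f (t - b / t) = ∫ t in Ioi 0, f (t - b / t) := by
    rw [← setIntegral_congr_fun measurableSet_Ioi hmirror,
      integral_comp_div_Ioi_zero hb (fun t => f (t - b / t))]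
  calc ∫ t in Ioi 0, f (t - b / t)
      = (2 : ℝ)⁻¹ • ((∫ t in Ioi 0, f (t - b / t)) + ∫ t in Ioi 0, (b / t ^ 2) • f (t - b / t)) := by
        rw [hsame, ← two_smul ℝ, smul_smul, inv_mul_cancel₀ two_ne_zero, one_smul]
    _ = (2 : ℝ)⁻¹ • ∫ t in Ioi 0, (1 + b / t ^ 2) • f (t - b / t) := by
        simp only [add_smul, one_smul, integral_add hunweighted hmirrored]
    _ = (2 : ℝ)⁻¹ • ∫ u, f u := by rw [integral_comp_sub_div_Ioi_zero hb]

end CauchySchlomilch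

lemma exp_neg_sq_add_div_sq {b t : ℝ} (ht : t ≠ 0) :
    exp (-(t ^ 2 + b ^ 2 / t ^ 2)) = exp (-(2 * b)) * exp (-(t - b / t) ^ 2) := by
  rw [← exp_add]
  congr 1
  field_simp
  ring

theorem integral_exp_neg_sq_add_div_sq {b : ℝ} (hb : 0 ≤ b) :
    ∫ t in Ioi 0, exp (-(t ^ 2 + b ^ 2 / t ^ 2)) = √π / 2 * exp (-(2 * b)) := by
  rcases hb.eq_or_lt with rfl | hb
  · simpa using integral_gaussian_Ioi 1
  have hgauss : Integrable fun u : ℝ => exp (-u ^ 2) := by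
    simpa using integrable_exp_neg_mul_sq one_pos
  rw [setIntegral_congr_fun measurableSet_Ioi fun t ht => exp_neg_sq_add_div_sq (mem_Ioi.mp ht).ne',
    integral_const_mul,
    integral_comp_sub_div_Ioi_zero_of_even hb hgauss fun u => by rw [neg_sq]]
  rw [show ∫ u, exp (-u ^ 2) = √π by simpa using integral_gaussian 1]
  ring

theorem stmt4 (x : ℝ) :
    ∫ y in Set.Ioi (0 : ℝ),
        (1 / (2 * Real.sqrt (Real.pi * y))) * Real.exp (-x ^ 2 / (4 * y)) * Real.exp (-y)
      = (1 / 2) * Real.exp (-|x|) := by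
  rw [← integral_comp_rpow_Ioi_of_pos two_pos]
  have hintegrand : EqOn
      (fun t : ℝ => (2 * t ^ ((2 : ℝ) - 1)) • ((1 / (2 * √(π * t ^ (2 : ℝ))))
        * exp (-x ^ 2 / (4 * t ^ (2 : ℝ))) * exp (-t ^ (2 : ℝ))))
      (fun t => (√π)⁻¹ * exp (-(t ^ 2 + (|x| / 2) ^ 2 / t ^ 2))) (Ioi 0) := fun t (ht : 0 < t) => by
    simp only [rpow_two, show (2 : ℝ) - 1 = 1 by norm_num, rpow_one, smul_eq_mul,
      sqrt_mul pi_pos.le, sqrt_sq ht.le, div_pow, sq_abs]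
    have hexponent : -x ^ 2 / (4 * t ^ 2) + -t ^ 2 = -(t ^ 2 + x ^ 2 / 2 ^ 2 / t ^ 2) := by ring
    rw [← hexponent, exp_add]
    field_simp
  rw [setIntegral_congr_fun measurableSet_Ioi hintegrand, integral_const_mul,
    integral_exp_neg_sq_add_div_sq (by positivity), mul_div_cancel₀ _ two_ne_zero]
  field_simp
end

section
/- For every subspace H of ℝ^n, the function (t_1,...,t_n) ↦ vol_H(diag(e^{t_1},...,e^{t_n}) B_2^n ∩ H) is log-concave on ℝ^n, where B_2^n is the Euclidean unit ball. -/
open MeasureTheory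

/-!
Parametrize `H` isometrically by `ℝ^d` through a matrix `B`. Then `diag(e^u) B_2^n ∩ H` is the
ellipsoid `{y | yᵀ M_u y ≤ 1}` with `M_u = (D_u B)ᵀ (D_u B)`, `D_u = diag(e^{-u})`, so its volume
is `vol(B_2^d) / √(det M_u)`. The symmetrized Cauchy–Binet formula
`d! · det (Aᵀ A) = ∑_{f : [d] → [n]} det (A_f)²` writes `det M_u` as a nonnegative combination of
the exponentials `exp (-2 ∑_j u_{f j})` of linear functions of `u`. By Hölder's inequality such a
combination is log-convex, hence the volume is log-concave.
-/

namespace Real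

open Finset

theorem sum_rpow_mul_rpow_le {ι : Type*} (s : Finset ι) {a b : ι → ℝ}
    (ha : ∀ i ∈ s, 0 ≤ a i) (hb : ∀ i ∈ s, 0 ≤ b i) {l : ℝ} (hl0 : 0 ≤ l) (hl1 : l ≤ 1) :
    ∑ i ∈ s, a i ^ l * b i ^ (1 - l) ≤ (∑ i ∈ s, a i) ^ l * (∑ i ∈ s, b i) ^ (1 - l) := by
  rcases hl0.eq_or_lt with rfl | hl0
  · simp
  rcases hl1.eq_or_lt with rfl | hl1
  · simp
  have := inner_le_Lp_mul_Lq_of_nonneg s (HolderConjugate.inv_one_sub_inv hl0 hl1)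
    (f := fun i => a i ^ l) (g := fun i => b i ^ (1 - l))
    (fun i hi => rpow_nonneg (ha i hi) _) (fun i hi => rpow_nonneg (hb i hi) _)
  rwa [sum_congr rfl fun i hi => rpow_rpow_inv (ha i hi) hl0.ne',
    sum_congr rfl fun i hi => rpow_rpow_inv (hb i hi) (sub_pos.2 hl1).ne', one_div, one_div,
    inv_inv, inv_inv] at this

theorem sum_mul_exp_le {ι E : Type*} [AddCommGroup E] [Module ℝ E] (s : Finset ι)
    {c : ι → ℝ} (hc : ∀ i ∈ s, 0 ≤ c i) (L : ι → E →ₗ[ℝ] ℝ) (x y : E) {l : ℝ} (hl0 : 0 ≤ l)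
    (hl1 : l ≤ 1) :
    ∑ i ∈ s, c i * exp (L i (l • x + (1 - l) • y))
      ≤ (∑ i ∈ s, c i * exp (L i x)) ^ l * (∑ i ∈ s, c i * exp (L i y)) ^ (1 - l) := by
  calc ∑ i ∈ s, c i * exp (L i (l • x + (1 - l) • y))
      = ∑ i ∈ s, (c i * exp (L i x)) ^ l * (c i * exp (L i y)) ^ (1 - l) := by
        refine sum_congr rfl fun i hi => ?_
        have hc_rpow : c i ^ l * c i ^ (1 - l) = c i := by
          rw [← rpow_add' (hc i hi) (by simp), add_sub_cancel, rpow_one]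
        rw [mul_rpow (hc i hi) (exp_pos _).le, mul_rpow (hc i hi) (exp_pos _).le, ← exp_mul,
          ← exp_mul, map_add, map_smul, map_smul, smul_eq_mul, smul_eq_mul, exp_add,
          mul_comm (L i x), mul_comm (L i y)]
        linear_combination (-(exp (l * L i x) * exp ((1 - l) * L i y))) * hc_rpow
    _ ≤ _ := sum_rpow_mul_rpow_le s (fun i hi => mul_nonneg (hc i hi) (exp_pos _).le)
        (fun i hi => mul_nonneg (hc i hi) (exp_pos _).le) hl0 hl1

theorem inv_sqrt_mul_rpow_mul_le {a b c V l : ℝ} (ha : 0 < a) (hb : 0 < b) (hc : 0 < c)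
    (hV : 0 ≤ V) (h : c ≤ a ^ l * b ^ (1 - l)) :
    ((√a)⁻¹ * V) ^ l * ((√b)⁻¹ * V) ^ (1 - l) ≤ (√c)⁻¹ * V := by
  have inv_sqrt_rpow (x : ℝ) (hx : 0 ≤ x) (p : ℝ) : ((√x)⁻¹) ^ p = (√(x ^ p))⁻¹ := by
    rw [inv_rpow (sqrt_nonneg x), sqrt_eq_rpow, sqrt_eq_rpow, ← rpow_mul hx, ← rpow_mul hx,
      mul_comm]
  rw [mul_rpow (by positivity) hV, mul_rpow (by positivity) hV, mul_mul_mul_comm,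
    ← rpow_add' hV (by simp), add_sub_cancel, rpow_one, inv_sqrt_rpow a ha.le,
    inv_sqrt_rpow b hb.le, ← mul_inv, ← sqrt_mul (by positivity)]
  gcongr

end Real

namespace Matrix

open Finset Real WithLp

section CauchyBinet

variable {m n R : Type*} [Fintype m] [Fintype n] [DecidableEq n] [CommRing R]

theorem det_transpose_mul_self_eq_sum (A : Matrix m n R) :
    det (Aᵀ * A) = ∑ f : n → m, (∏ j, A (f j) j) * det (A.submatrix f id) := by
  have hrows : Aᵀ * A = of fun j => ∑ i, A i j • A i := by
    ext j k
    simp [mul_apply, Finset.sum_apply]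
  rw [hrows]
  show detRowAlternating.toMultilinearMap (fun j => ∑ i, A i j • A i) = _
  rw [MultilinearMap.map_sum]
  refine sum_congr rfl fun f _ => ?_
  rw [MultilinearMap.map_smul_univ]
  rfl

theorem factorial_card_mul_det_transpose_mul_self (A : Matrix m n R) :
    (Fintype.card n).factorial * det (Aᵀ * A) = ∑ f : n → m, det (A.submatrix f id) ^ 2 := by
  -- Reindexing by `f ↦ f ∘ σ⁻¹` absorbs the sign of `σ` into the minor.
  have hσ (σ : Equiv.Perm n) : ∑ f : n → m,
      Equiv.Perm.sign σ * det (A.submatrix f id) * ∏ j, A (f (σ j)) j = det (Aᵀ * A) := by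
    rw [det_transpose_mul_self_eq_sum, ← (σ.arrowCongr (Equiv.refl m)).sum_comp]
    refine sum_congr rfl fun g _ => ?_
    have hsign : ((Equiv.Perm.sign σ : ℤ) : R) * (Equiv.Perm.sign σ : ℤ) = 1 := by
      rw [← Int.cast_mul, ← Units.val_mul, Int.units_mul_self, Units.val_one, Int.cast_one]
    rw [show A.submatrix (σ.arrowCongr (Equiv.refl m) g) id
      = (A.submatrix g id).submatrix ⇑σ⁻¹ id from rfl, det_permute]
    simp only [Equiv.Perm.sign_inv, Equiv.arrowCongr_apply, Function.comp_apply,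
      Equiv.coe_refl, id_eq, Equiv.symm_apply_apply]
    linear_combination (∏ j, A (g j) j) * det (A.submatrix g id) * hsign
  calc (Fintype.card n).factorial * det (Aᵀ * A)
      = ∑ σ : Equiv.Perm n, ∑ f : n → m,
          Equiv.Perm.sign σ * det (A.submatrix f id) * ∏ j, A (f (σ j)) j := by
        simp [hσ, Fintype.card_perm]
    _ = ∑ f : n → m, det (A.submatrix f id) ^ 2 := by
        rw [sum_comm]
        refine sum_congr rfl fun f _ => ?_
        conv_rhs => rw [sq]; arg 2; rw [det_apply']
        rw [mul_sum]
        exact sum_congr rfl fun σ _ => by simp only [submatrix_apply, id_eq]; ring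

end CauchyBinet

section Ellipsoid

variable {m n : Type*} [Fintype m] [Fintype n]

theorem dotProduct_transpose_mul_self_mulVec (A : Matrix m n ℝ) (v : n → ℝ) :
    v ⬝ᵥ (Aᵀ * A) *ᵥ v = ∑ i, (A *ᵥ v) i ^ 2 := by
  rw [← mulVec_mulVec, dotProduct_mulVec, vecMul_transpose]
  simp [dotProduct, sq]

variable [DecidableEq m]

theorem posDef_transpose_mul_self_diagonal_exp_mul {B : Matrix m n ℝ}
    (hB : Function.Injective B.mulVec) (u : m → ℝ) :
    ((diagonal (fun i => exp (-u i)) * B)ᵀ * (diagonal (fun i => exp (-u i)) * B)).PosDef := by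
  rw [← conjTranspose_eq_transpose_of_trivial]
  refine PosDef.conjTranspose_mul_self _ fun v w h => hB ?_
  rw [← mulVec_mulVec, ← mulVec_mulVec] at h
  exact mulVec_injective_of_det_ne_zero (by simp [det_diagonal, prod_ne_zero_iff, exp_ne_zero]) h

variable [DecidableEq n]

open scoped MatrixOrder in
theorem addHaar_setOf_dotProduct_mulVec_le_one (μ : Measure (EuclideanSpace ℝ n))
    [μ.IsAddHaarMeasure] {M : Matrix n n ℝ} (hM : M.PosDef) :
    μ {y | ofLp y ⬝ᵥ M *ᵥ ofLp y ≤ 1}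
      = ENNReal.ofReal (√(det M))⁻¹ * μ (Metric.closedBall 0 1) := by
  set S := CFC.sqrt M
  have hSS : Sᵀ * S = M := by
    rw [← conjTranspose_eq_transpose_of_trivial, (nonneg_iff_posSemidef.1 (CFC.sqrt_nonneg M)).1.eq,
      CFC.sqrt_mul_sqrt_self M hM.posSemidef.nonneg]
  have hdet : |det S| = √(det M) := by
    rw [← hSS, det_mul, det_transpose, ← sq, sqrt_sq_eq_abs]
  have hset : {y : EuclideanSpace ℝ n | ofLp y ⬝ᵥ M *ᵥ ofLp y ≤ 1}
      = toLpLin 2 2 S ⁻¹' Metric.closedBall 0 1 := by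
    ext y
    rw [Set.mem_ofPred_eq, Set.mem_preimage, mem_closedBall_zero_iff,
      ← sq_le_one_iff₀ (norm_nonneg _), EuclideanSpace.norm_sq_eq, ← hSS,
      dotProduct_transpose_mul_self_mulVec]
    simp [toLpLin_apply]
  have hdet0 : det S ≠ 0 := by
    rw [← abs_pos, hdet]
    exact sqrt_pos.2 hM.det_pos
  rw [hset, Measure.addHaar_preimage_linearMap μ (by simpa using hdet0), LinearMap.det_toLpLin,
    abs_inv, hdet]

theorem det_transpose_mul_self_diagonal_mul (e : m → ℝ) (B : Matrix m n ℝ) :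
    det ((diagonal e * B)ᵀ * (diagonal e * B))
      = ∑ f : n → m, ((Fintype.card n).factorial : ℝ)⁻¹ * det (B.submatrix f id) ^ 2
          * ∏ j, e (f j) ^ 2 := by
  rw [← inv_mul_cancel_left₀ (by positivity : ((Fintype.card n).factorial : ℝ) ≠ 0)
    (det _), factorial_card_mul_det_transpose_mul_self, mul_sum]
  refine sum_congr rfl fun f _ => ?_
  have hsub : (diagonal e * B).submatrix f id = diagonal (e ∘ f) * B.submatrix f id := by
    ext j k
    simp [diagonal_mul]
  rw [hsub, det_mul, det_diagonal, mul_pow, ← prod_pow]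
  simp only [Function.comp_apply]
  ring

theorem det_transpose_mul_self_diagonal_exp_mul_le (B : Matrix m n ℝ) (s t : m → ℝ) {l : ℝ}
    (hl0 : 0 ≤ l) (hl1 : l ≤ 1) :
    let G : (m → ℝ) → ℝ := fun u =>
      det ((diagonal (fun i => exp (-u i)) * B)ᵀ * (diagonal (fun i => exp (-u i)) * B))
    G (l • s + (1 - l) • t) ≤ G s ^ l * G t ^ (1 - l) := by
  intro G
  have hG (u : m → ℝ) : G u = ∑ f : n → m, ((Fintype.card n).factorial : ℝ)⁻¹
      * det (B.submatrix f id) ^ 2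
      * exp (((-2 : ℝ) • ∑ j, (LinearMap.proj (f j) : (m → ℝ) →ₗ[ℝ] ℝ)) u) := by
    simp only [G, det_transpose_mul_self_diagonal_mul]
    refine sum_congr rfl fun f _ => ?_
    simp [← exp_nat_mul, ← exp_sum, mul_sum]
  simp only [hG]
  exact sum_mul_exp_le _ (fun f _ => by positivity) _ s t hl0 hl1

def expEllipsoid (B : Matrix m n ℝ) (u : m → ℝ) : Set (EuclideanSpace ℝ n) :=
  {y | ∑ i, (exp (-u i) * (B *ᵥ ofLp y) i) ^ 2 ≤ 1}

theorem addHaar_expEllipsoid (μ : Measure (EuclideanSpace ℝ n)) [μ.IsAddHaarMeasure]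
    {B : Matrix m n ℝ} (hB : Function.Injective B.mulVec) (u : m → ℝ) :
    μ (B.expEllipsoid u) = ENNReal.ofReal
      (√(det ((diagonal (fun i => exp (-u i)) * B)ᵀ * (diagonal (fun i => exp (-u i)) * B))))⁻¹
        * μ (Metric.closedBall 0 1) := by
  rw [← addHaar_setOf_dotProduct_mulVec_le_one μ
    (posDef_transpose_mul_self_diagonal_exp_mul hB u)]
  congr 1
  ext y
  rw [expEllipsoid, Set.mem_ofPred_eq, Set.mem_ofPred_eq, dotProduct_transpose_mul_self_mulVec]
  simp only [← mulVec_mulVec, mulVec_diagonal]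

theorem toReal_addHaar_expEllipsoid_rpow_mul_le (μ : Measure (EuclideanSpace ℝ n))
    [μ.IsAddHaarMeasure] {B : Matrix m n ℝ} (hB : Function.Injective B.mulVec) (s t : m → ℝ)
    {l : ℝ} (hl0 : 0 ≤ l) (hl1 : l ≤ 1) :
    (μ (B.expEllipsoid s)).toReal ^ l * (μ (B.expEllipsoid t)).toReal ^ (1 - l)
      ≤ (μ (B.expEllipsoid (l • s + (1 - l) • t))).toReal := by
  simp only [addHaar_expEllipsoid μ hB, ENNReal.toReal_mul,
    ENNReal.toReal_ofReal (inv_nonneg.2 (sqrt_nonneg _))]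
  exact inv_sqrt_mul_rpow_mul_le (posDef_transpose_mul_self_diagonal_exp_mul hB s).det_pos
    (posDef_transpose_mul_self_diagonal_exp_mul hB t).det_pos
    (posDef_transpose_mul_self_diagonal_exp_mul hB _).det_pos ENNReal.toReal_nonneg
    (det_transpose_mul_self_diagonal_exp_mul_le B s t hl0 hl1)

end Ellipsoid

end Matrix

theorem stmt14 (n : ℕ) (H : Submodule ℝ (EuclideanSpace ℝ (Fin n)))
    (f : (Fin n → ℝ) → ℝ)
    (hf : ∀ t, f t = (μH[((Module.finrank ℝ H : ℕ) : ℝ)]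
        ({x : EuclideanSpace ℝ (Fin n) | ∑ i, (Real.exp (-t i) * x i) ^ 2 ≤ 1}
          ∩ (H : Set (EuclideanSpace ℝ (Fin n))))).toReal) :
    ∀ s t : Fin n → ℝ, ∀ l : ℝ, 0 ≤ l → l ≤ 1 →
      f s ^ l * f t ^ (1 - l) ≤ f (l • s + (1 - l) • t) := by
  intro s t l hl0 hl1
  set d := Module.finrank ℝ H
  let φ : EuclideanSpace ℝ (Fin d) →ₗᵢ[ℝ] EuclideanSpace ℝ (Fin n) :=
    H.subtypeₗᵢ.comp (stdOrthonormalBasis ℝ H).repr.symm.toLinearIsometry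
  let B := (Matrix.toLpLin 2 2).symm φ.toLinearMap
  have hB (y : EuclideanSpace ℝ (Fin d)) : B.mulVec (WithLp.ofLp y) = WithLp.ofLp (φ y) := by
    exact congrArg WithLp.ofLp
      (LinearMap.congr_fun ((Matrix.toLpLin 2 2).apply_symm_apply φ.toLinearMap) y)
  have hBinj : Function.Injective B.mulVec := fun v w h =>
    WithLp.toLp_injective 2 <| φ.injective <| WithLp.ofLp_injective 2 <| by simpa [← hB] using h
  have hrange : Set.range φ = H := by
    simp [φ, Set.range_comp]
  have hsection (u : Fin n → ℝ) : f u = (μH[(d : ℝ)] (B.expEllipsoid u)).toReal := by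
    rw [hf, ← hrange, ← Set.image_preimage_eq_inter_range,
      φ.isometry.hausdorffMeasure_image (Or.inl (Nat.cast_nonneg _))]
    congr 2
    ext y
    simp [Matrix.expEllipsoid, hB]
  have : (μH[(d : ℝ)] : Measure (EuclideanSpace ℝ (Fin d))).IsAddHaarMeasure := by
    simpa using isAddHaarMeasure_hausdorffMeasure (E := EuclideanSpace ℝ (Fin d))
  simpa only [hsection] using
    Matrix.toReal_addHaar_expEllipsoid_rpow_mul_le μH[(d : ℝ)] hBinj s t hl0 hl1
end

section
/- Let K be the parallelogram in ℝ² with vertices (−1,−2), (−1,−1), (1,1), (1,2), let μ be the uniform probability measure on K, and f(t) = log μ(diag(1, e^t) K). Then f is not concave on ℝ. Specifically: f(0) = 0 = max f, lim_{t→−∞} f(t) = −∞, and lim_{t→+∞} f(t) > −∞. -/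
/-!
Write `K = {|x| ≤ 1, |2y - 3x| ≤ 1}`; stretching by `diag(1, eᵗ)` turns it into the same kind of
parallelogram with `2y` replaced by `2cy`, `c = e⁻ᵗ`. For `t → -∞` it is squeezed into the strip
`|y| ≤ 2eᵗ`, so `f(t) ≤ t + O(1)`. For `c ∈ [0, 1]` the intersection with `K` grows with `c`
(membership is convex in `c`) and always contains a box around the origin, so `f` has a finite
limit at `+∞`. Finally `f(log 2) < 0 = f(0)`, and a concave function with a decreasing secant
tends to `-∞`, contradicting that limit.
-/

open MeasureTheory Filter

noncomputable def e2 : (Fin 2 → ℝ) → EuclideanSpace ℝ (Fin 2) :=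
  (EuclideanSpace.equiv (Fin 2) ℝ).symm

open Set Real Topology

theorem ConcaveOn.tendsto_atTop_atBot {𝕜 : Type*} [Field 𝕜] [LinearOrder 𝕜]
    [IsStrictOrderedRing 𝕜] {f : 𝕜 → 𝕜} {a b : 𝕜} (hf : ConcaveOn 𝕜 (Ici a) f) (hab : a < b)
    (hlt : f b < f a) : Tendsto f atTop atBot := by
  have hslope : slope f a b < 0 := by
    rw [slope_def_field]; exact div_neg_of_neg_of_pos (sub_neg.2 hlt) (sub_pos.2 hab)
  have hline : Tendsto (fun z => f a + slope f a b * (z - a)) atTop atBot :=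
    tendsto_atBot_add_const_left _ _ <|
      Tendsto.const_mul_atTop_of_neg hslope <| by
        simpa [sub_eq_add_neg] using tendsto_atTop_add_const_right atTop (-a) tendsto_id
  refine tendsto_atBot_mono' atTop ?_ hline
  filter_upwards [eventually_ge_atTop b] with z hbz
  have hz : a < z := hab.trans_le hbz
  have hanti := hf.antitoneOn_slope_gt self_mem_Ici ⟨hab.le, hab⟩ ⟨hz.le, hz⟩ hbz
  rw [slope_def_field, div_le_iff₀ (sub_pos.2 hz)] at hanti
  linarith

def rect (a b c d : ℝ) : Set (EuclideanSpace ℝ (Fin 2)) :=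
  {p | p 0 ∈ Icc a b ∧ p 1 ∈ Icc c d}

lemma rect_eq_preimage (a b c d : ℝ) : rect a b c d =
    (MeasurableEquiv.toLp 2 (Fin 2 → ℝ)).symm ⁻¹' univ.pi fun i => Icc (![a, c] i) (![b, d] i) := by
  ext p
  simp only [mem_preimage, mem_univ_pi, Fin.forall_fin_two]
  rfl

lemma measurableSet_rect (a b c d : ℝ) : MeasurableSet (rect a b c d) := by
  rw [rect_eq_preimage]
  exact (MeasurableEquiv.toLp 2 (Fin 2 → ℝ)).symm.measurable
    (MeasurableSet.univ_pi fun _ => measurableSet_Icc)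

lemma volume_rect (a b c d : ℝ) :
    volume (rect a b c d) = ENNReal.ofReal (b - a) * ENNReal.ofReal (d - c) := by
  rw [rect_eq_preimage,
    (EuclideanSpace.volume_preserving_symm_measurableEquiv_toLp (Fin 2)).measure_preimage
      (MeasurableSet.univ_pi fun _ => measurableSet_Icc).nullMeasurableSet, volume_pi_pi]
  simp [Fin.prod_univ_two, Real.volume_Icc]

def parallelogram (c : ℝ) : Set (EuclideanSpace ℝ (Fin 2)) :=
  {p | p 0 ∈ Icc (-1) 1 ∧ 2 * c * p 1 - 3 * p 0 ∈ Icc (-1) 1}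

lemma convex_parallelogram (c : ℝ) : Convex ℝ (parallelogram c) := by
  rintro p ⟨hx, hy⟩ q ⟨hx', hy'⟩ a b ha hb hab
  refine ⟨convex_Icc (-1 : ℝ) 1 hx hx' ha hb hab, ?_⟩
  convert convex_Icc (-1 : ℝ) 1 hy hy' ha hb hab using 1
  simp only [PiLp.add_apply, PiLp.smul_apply, smul_eq_mul]
  ring

lemma convexHull_eq_parallelogram_one :
    convexHull ℝ {e2 ![-1, -2], e2 ![-1, -1], e2 ![1, 1], e2 ![1, 2]} = parallelogram 1 := by
  set S : Set (EuclideanSpace ℝ (Fin 2)) := {e2 ![-1, -2], e2 ![-1, -1], e2 ![1, 1], e2 ![1, 2]}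
  refine (convexHull_min ?_ (convex_parallelogram 1)).antisymm ?_
  · rintro p hp
    simp only [S, mem_insert_iff, mem_singleton_iff] at hp
    rcases hp with rfl | rfl | rfl | rfl <;> norm_num [parallelogram, e2]
  · rintro p ⟨⟨hx, hx'⟩, hy, hy'⟩
    have hC := convex_convexHull ℝ S
    have mem : ∀ v ∈ S, v ∈ convexHull ℝ S := subset_convexHull ℝ S
    obtain ⟨u, hu⟩ : ∃ u : ℝ, u = (p 0 + 1) / 2 := ⟨_, rfl⟩
    obtain ⟨w, hw⟩ : ∃ w : ℝ, w = (2 * p 1 - 3 * p 0 + 1) / 2 := ⟨_, rfl⟩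
    have hp : p = (1 - w) • ((1 - u) • e2 ![-1, -2] + u • e2 ![1, 1])
        + w • ((1 - u) • e2 ![-1, -1] + u • e2 ![1, 2]) := by
      ext i
      fin_cases i <;> simp [e2, hu, hw] <;> ring
    rw [hp]
    exact hC (hC (mem _ (by simp [S])) (mem _ (by simp [S])) (by linarith) (by linarith) (by ring))
      (hC (mem _ (by simp [S])) (mem _ (by simp [S])) (by linarith) (by linarith) (by ring))
      (by linarith) (by linarith) (by ring)

lemma image_stretch_parallelogram (c : ℝ) {s : ℝ} (hs : s ≠ 0) :
    (fun p : EuclideanSpace ℝ (Fin 2) => e2 ![p 0, s * p 1]) '' parallelogram c =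
      parallelogram (c / s) := by
  ext p
  constructor
  · rintro ⟨q, ⟨hx, hy⟩, rfl⟩
    refine ⟨hx, ?_⟩
    have h : 2 * (c / s) * (s * q 1) = 2 * c * q 1 := by field_simp
    show 2 * (c / s) * (s * q 1) - 3 * q 0 ∈ _
    rwa [h]
  · rintro ⟨hx, hy⟩
    refine ⟨e2 ![p 0, p 1 / s], ⟨hx, ?_⟩, ?_⟩
    · have h : 2 * c * (p 1 / s) = 2 * (c / s) * p 1 := by ring
      show 2 * c * (p 1 / s) - 3 * p 0 ∈ _
      rwa [h]
    · ext i
      fin_cases i <;> simp [e2]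
      field_simp

lemma ordConnected_setOf_mem_parallelogram (p : EuclideanSpace ℝ (Fin 2)) :
    OrdConnected {c | p ∈ parallelogram c} := by
  rw [← convex_iff_ordConnected]
  rintro c₁ ⟨hx, h₁⟩ c₂ ⟨-, h₂⟩ a b ha hb hab
  refine ⟨hx, ?_⟩
  convert convex_Icc (-1 : ℝ) 1 h₁ h₂ ha hb hab using 1
  simp only [smul_eq_mul]
  linear_combination (3 * p 0) * hab

lemma parallelogram_subset_rect {c : ℝ} (hc : 0 < c) :
    parallelogram c ⊆ rect (-1) 1 (-(2 / c)) (2 / c) := by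
  rintro p ⟨hx, hy₁, hy₂⟩
  refine ⟨hx, ?_, ?_⟩
  · rw [neg_le, le_div_iff₀ hc]; linarith [hx.1, hx.2]
  · rw [le_div_iff₀ hc]; linarith [hx.1, hx.2]

lemma rect_subset_parallelogram {c r : ℝ} (hc : 0 ≤ c) (hcr : 4 * c * r ≤ 1) :
    rect (-(1 / 6)) (1 / 6) (-r) r ⊆ parallelogram c := by
  rintro p ⟨⟨hx₁, hx₂⟩, hy₁, hy₂⟩
  have h₁ := mul_le_mul_of_nonneg_left hy₁ hc
  have h₂ := mul_le_mul_of_nonneg_left hy₂ hc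
  exact ⟨⟨by linarith, by linarith⟩, by linarith, by linarith⟩

noncomputable def overlap (c : ℝ) : ℝ :=
  (volume (parallelogram c ∩ parallelogram 1)).toReal

lemma volume_inter_parallelogram_one_ne_top (s : Set (EuclideanSpace ℝ (Fin 2))) :
    volume (s ∩ parallelogram 1) ≠ ⊤ := by
  refine ne_top_of_le_ne_top ?_ (measure_mono (inter_subset_right.trans
    (parallelogram_subset_rect one_pos)))
  rw [volume_rect]
  exact ENNReal.mul_ne_top ENNReal.ofReal_ne_top ENNReal.ofReal_ne_top

lemma overlap_pos {c : ℝ} (hc : 0 ≤ c) : 0 < overlap c := by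
  set r := 1 / (4 * (c + 1))
  have hsub : rect (-(1 / 6)) (1 / 6) (-r) r ⊆ parallelogram c ∩ parallelogram 1 :=
    subset_inter (rect_subset_parallelogram hc (by simp only [r]; field_simp; linarith))
      (rect_subset_parallelogram zero_le_one (by simp only [r]; field_simp; linarith))
  refine ENNReal.toReal_pos (ne_of_gt ?_) (volume_inter_parallelogram_one_ne_top _)
  refine lt_of_lt_of_le ?_ (measure_mono hsub)
  rw [volume_rect]
  exact ENNReal.mul_pos (by simp) (by simp [r]; positivity)

lemma overlap_le_overlap_one (c : ℝ) : overlap c ≤ overlap 1 := by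
  unfold overlap
  rw [inter_self]
  exact ENNReal.toReal_mono (by simpa using volume_inter_parallelogram_one_ne_top univ)
    (measure_mono inter_subset_right)

lemma overlap_le {c : ℝ} (hc : 0 < c) : overlap c ≤ 8 / c := by
  unfold overlap
  have h := measure_mono (μ := volume)
    (inter_subset_left.trans (parallelogram_subset_rect hc) : parallelogram c ∩ parallelogram 1 ⊆ _)
  rw [volume_rect, ← ENNReal.ofReal_mul (by norm_num),
    show (1 - -1) * (2 / c - -(2 / c)) = 8 / c by ring] at h
  exact (ENNReal.toReal_mono ENNReal.ofReal_ne_top h).trans_eq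
    (ENNReal.toReal_ofReal (by positivity))

lemma monotoneOn_overlap : MonotoneOn overlap (Icc 0 1) := by
  intro c _ c' hc' hcc'
  refine ENNReal.toReal_mono (volume_inter_parallelogram_one_ne_top _) (measure_mono ?_)
  exact fun p ⟨hp, hp₁⟩ =>
    ⟨(ordConnected_setOf_mem_parallelogram p).out hp hp₁ ⟨hcc', hc'.2⟩, hp₁⟩

lemma overlap_inv_two_lt : overlap 2⁻¹ < overlap 1 := by
  set D := rect (9 / 10) 1 1 (3 / 2)
  have hD : D ⊆ parallelogram 1 := fun p ⟨⟨hx₁, hx₂⟩, hy₁, hy₂⟩ =>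
    ⟨⟨by linarith, hx₂⟩, by linarith, by linarith⟩
  have hdisj : parallelogram 2⁻¹ ∩ parallelogram 1 ⊆ parallelogram 1 \ D :=
    fun p ⟨⟨_, hy, _⟩, hp⟩ => ⟨hp, fun ⟨⟨hx, _⟩, _, hy'⟩ => by linarith⟩
  have hD₀ : volume D ≠ 0 := by simp [D, volume_rect]; norm_num
  have hfin : volume (parallelogram 1) ≠ ⊤ := by
    simpa using volume_inter_parallelogram_one_ne_top univ
  unfold overlap
  rw [inter_self]
  refine ENNReal.toReal_strict_mono hfin ((measure_mono hdisj).trans_lt ?_)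
  rw [measure_sdiff hD (measurableSet_rect _ _ _ _).nullMeasurableSet
    (ne_top_of_le_ne_top hfin (measure_mono hD))]
  exact ENNReal.sub_lt_self hfin (fun h => hD₀ (measure_mono_null hD h)) hD₀

lemma exists_tendsto_overlap_nhdsGT_zero : ∃ A, 0 < A ∧ Tendsto overlap (𝓝[>] 0) (𝓝 A) := by
  have hlow : ∀ c ∈ Ioo (0 : ℝ) 1, overlap 0 ≤ overlap c := fun c hc =>
    monotoneOn_overlap ⟨le_rfl, zero_le_one⟩ (Ioo_subset_Icc_self hc) hc.1.le
  have hne : (Ioo (0 : ℝ) 1).Nonempty := nonempty_Ioo.2 one_pos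
  exact ⟨_, (overlap_pos le_rfl).trans_le (le_csInf (hne.image _) (forall_mem_image.2 hlow)),
    (monotoneOn_overlap.mono Ioo_subset_Icc_self).tendsto_nhdsWithin_Ioo_right hne
      ⟨overlap 0, forall_mem_image.2 hlow⟩⟩

noncomputable def logOverlapRatio (t : ℝ) : ℝ :=
  log (overlap (exp t)⁻¹ / overlap 1)

lemma logOverlapRatio_zero : logOverlapRatio 0 = 0 := by
  simp [logOverlapRatio, (overlap_pos zero_le_one).ne']

lemma logOverlapRatio_nonpos (t : ℝ) : logOverlapRatio t ≤ 0 :=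
  log_nonpos (div_nonneg (overlap_pos (by positivity)).le (overlap_pos zero_le_one).le)
    ((div_le_one (overlap_pos zero_le_one)).2 (overlap_le_overlap_one _))

lemma logOverlapRatio_log_two_neg : logOverlapRatio (log 2) < 0 := by
  refine log_neg (div_pos (overlap_pos (by positivity)) (overlap_pos zero_le_one)) ?_
  rw [exp_log two_pos, div_lt_one (overlap_pos zero_le_one)]
  exact overlap_inv_two_lt

lemma tendsto_logOverlapRatio_atBot : Tendsto logOverlapRatio atBot atBot := by
  have hv := overlap_pos zero_le_one
  refine tendsto_atBot_mono (fun t => ?_) (tendsto_atBot_add_const_left _ (log (8 / overlap 1))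
    tendsto_id)
  calc logOverlapRatio t ≤ log (8 * exp t / overlap 1) := by
        refine log_le_log (div_pos (overlap_pos (by positivity)) hv) ?_
        gcongr
        simpa using overlap_le (inv_pos.2 (exp_pos t))
    _ = log (8 / overlap 1) + t := by
        rw [mul_div_right_comm, log_mul (by positivity) (exp_ne_zero t), log_exp]

lemma exists_tendsto_logOverlapRatio_atTop : ∃ L, Tendsto logOverlapRatio atTop (𝓝 L) := by
  obtain ⟨A, hA, hlim⟩ := exists_tendsto_overlap_nhdsGT_zero
  exact ⟨_, ((hlim.comp (tendsto_inv_atTop_nhdsGT_zero.comp tendsto_exp_atTop)).div_const _).log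
    (div_pos hA (overlap_pos zero_le_one)).ne'⟩

theorem stmt15 (K : Set (EuclideanSpace ℝ (Fin 2)))
    (hK : K = convexHull ℝ
      {e2 ![-1, -2], e2 ![-1, -1], e2 ![1, 1], e2 ![1, 2]})
    (Kt : ℝ → Set (EuclideanSpace ℝ (Fin 2)))
    (hKt : ∀ t, Kt t = (fun x : EuclideanSpace ℝ (Fin 2) =>
      e2 ![x 0, Real.exp t * x 1]) '' K)
    (f : ℝ → ℝ)
    (hf : ∀ t, f t = Real.log ((volume (Kt t ∩ K)).toReal / (volume K).toReal)) :
    f 0 = 0 ∧ (∀ t, f t ≤ 0) ∧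
      Tendsto f atBot atBot ∧
      (∃ L : ℝ, Tendsto f atTop (nhds L)) ∧
      ¬ ConcaveOn ℝ Set.univ f := by
  obtain rfl : f = logOverlapRatio := funext fun t => by
    rw [hf, hKt, hK, convexHull_eq_parallelogram_one, image_stretch_parallelogram _ (exp_ne_zero t),
      logOverlapRatio, overlap, overlap, inter_self, one_div]
  obtain ⟨L, hL⟩ := exists_tendsto_logOverlapRatio_atTop
  refine ⟨logOverlapRatio_zero, logOverlapRatio_nonpos, tendsto_logOverlapRatio_atBot, ⟨L, hL⟩,
    fun hconc => not_tendsto_nhds_of_tendsto_atBot ?_ L hL⟩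
  refine (hconc.subset (subset_univ _) (convex_Ici 0)).tendsto_atTop_atBot (log_pos one_lt_two) ?_
  rw [logOverlapRatio_zero]
  exact logOverlapRatio_log_two_neg
end
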